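/- The mean of the q-Bernoulli distribution: ∑_{κ=0}^{n} [κ]_q [n choose κ]_q p^κ ∏_{i=0}^{n-κ-1}(1 - p q^i) = [n]_q · p. -/

import Mathlib

/-- The `q`-analog `[n]_q = 1 + q + ⋯ + q^(n-1)` of a natural number. -/
def qNum {R : Type*} [CommRing R] (q : R) (n : ℕ) : R := ∑ i ∈ Finset.range n, q ^ i

/-- The `q`-factorial `[n]! = [1][2]⋯[n]`. -/
def qFact {R : Type*} [CommRing R] (q : R) (n : ℕ) : R := ∏ i ∈ Finset.range n, qNum q (i + 1)

/-- The Gaussian (`q`-)binomial coefficient, via the `q`-Pascal recursion. -/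
def qBinom {R : Type*} [CommRing R] (q : R) : ℕ → ℕ → R
  | _, 0 => 1
  | 0, _ + 1 => 0
  | n + 1, k + 1 => qBinom q n k + q ^ (k + 1) * qBinom q n (k + 1)

/-- The `q`-shifted product `(1 −· p)^m = ∏_{i=0}^{m-1} (1 - p q^i)`. -/
def qProdSub {R : Type*} [CommRing R] (q p : R) (m : ℕ) : R :=
  ∏ i ∈ Finset.range m, (1 - p * q ^ i)

/-- The `q`-shifted power `(x +· y)^m = ∏_{i=0}^{m-1} (x + q^i y)`. -/
def qProdAdd {R : Type*} [CommRing R] (q x y : R) (m : ℕ) : R :=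
  ∏ i ∈ Finset.range m, (x + q ^ i * y)

/-!
The absorption identity `[k+1] [n+1 choose k+1] = [n+1] [n choose k]` turns the mean into `[n] p`
times the total mass of the `q`-Bernoulli distribution with `n - 1` trials. That mass is `1`: by
`q`-Pascal and `(1 −· p)^(r+1) = (1 - p) (1 −· pq)^r`, the mass with `m + 1` trials is `p` times the
mass with `m` trials at `p` plus `1 - p` times the mass with `m` trials at `pq`.
-/

open Finset

section
variable {R : Type*} [CommRing R] (q : R)

lemma qNum_zero : qNum q 0 = 0 := rfl

lemma qNum_succ (n : ℕ) : qNum q (n + 1) = q * qNum q n + 1 := geom_sum_succ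

@[simp] lemma qBinom_zero_right (n : ℕ) : qBinom q n 0 = 1 := by cases n <;> rfl

lemma qBinom_succ_succ (n k : ℕ) :
    qBinom q (n + 1) (k + 1) = qBinom q n k + q ^ (k + 1) * qBinom q n (k + 1) := rfl

lemma qBinom_of_lt {n k : ℕ} (h : n < k) : qBinom q n k = 0 := by
  induction n generalizing k with
  | zero => obtain ⟨j, rfl⟩ := Nat.exists_eq_add_of_lt h; rfl
  | succ m ih =>
    obtain ⟨j, rfl⟩ : ∃ j, k = j + 1 := ⟨k - 1, by omega⟩
    rw [qBinom_succ_succ, ih (by omega), ih (by omega), mul_zero, add_zero]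

lemma qNum_mul_qBinom_succ_succ (n k : ℕ) :
    qNum q (k + 1) * qBinom q (n + 1) (k + 1) = qNum q (n + 1) * qBinom q n k := by
  induction n generalizing k with
  | zero =>
    cases k <;> simp [qBinom_succ_succ, qNum_succ, qNum_zero, qBinom_of_lt]
  | succ m ih =>
    cases k with
    | zero =>
      have h := ih 0
      simp only [qNum_succ q 0, qNum_zero, qBinom_zero_right] at h ⊢
      rw [qBinom_succ_succ, qBinom_zero_right, qNum_succ q (m + 1)]
      linear_combination q * h
    | succ j =>
      rw [qBinom_succ_succ q (m + 1), qNum_succ q (m + 1)]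
      linear_combination qBinom q (m + 1) (j + 1) * qNum_succ q (j + 1) + q * ih j +
        q ^ (j + 2) * ih (j + 1) - q * qNum q (m + 1) * qBinom_succ_succ q m j

lemma qProdSub_succ (p : R) (r : ℕ) :
    qProdSub q p (r + 1) = (1 - p) * qProdSub q (p * q) r := by
  simp only [qProdSub, prod_range_succ', pow_zero, mul_one, pow_succ, mul_assoc, mul_comm q]
  ring

def qBernoulliWeight (p : R) (n k : ℕ) : R := qBinom q n k * p ^ k * qProdSub q p (n - k)

lemma sum_qBernoulliWeight_succ_eq_mul_add (p : R) (m : ℕ) :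
    ∑ k ∈ range (m + 2), qBernoulliWeight q p (m + 1) k =
      p * ∑ k ∈ range (m + 1), qBernoulliWeight q p m k +
        ∑ k ∈ range (m + 2), q ^ k * qBinom q m k * p ^ k * qProdSub q p (m + 1 - k) := by
  simp only [qBernoulliWeight, sum_range_succ' _ (m + 1), mul_sum, qBinom_succ_succ,
    Nat.add_sub_add_right]
  simp only [pow_zero, qBinom_zero_right, mul_one, one_mul, Nat.sub_zero, ← add_assoc,
    ← sum_add_distrib]
  congr 1
  refine sum_congr rfl fun k _ => ?_
  ring

lemma sum_pow_mul_qBinom_mul_pow_mul_qProdSub (p : R) (m : ℕ) :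
    ∑ k ∈ range (m + 2), q ^ k * qBinom q m k * p ^ k * qProdSub q p (m + 1 - k) =
      (1 - p) * ∑ k ∈ range (m + 1), qBernoulliWeight q (p * q) m k := by
  rw [sum_range_succ, qBinom_of_lt q (Nat.lt_succ_self m), mul_sum]
  simp only [mul_zero, zero_mul, add_zero]
  refine sum_congr rfl fun k hk => ?_
  rw [show m + 1 - k = m - k + 1 by grind, qProdSub_succ, qBernoulliWeight, mul_pow]
  ring

lemma sum_qBernoulliWeight (p : R) (n : ℕ) :
    ∑ k ∈ range (n + 1), qBernoulliWeight q p n k = 1 := by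
  induction n generalizing p with
  | zero => simp [qBernoulliWeight, qProdSub]
  | succ m ih =>
    rw [sum_qBernoulliWeight_succ_eq_mul_add, sum_pow_mul_qBinom_mul_pow_mul_qProdSub, ih, ih]
    ring

end

theorem qBernoulli_mean_general {F : Type*} [Field F] (q p : F) (n : ℕ) :
    ∑ κ ∈ Finset.range (n + 1), qNum q κ * qBinom q n κ * p ^ κ * qProdSub q p (n - κ) =
      qNum q n * p := by
  cases n with
  | zero => simp [qNum_zero]
  | succ m =>
    have absorb (k : ℕ) : qNum q (k + 1) * qBinom q (m + 1) (k + 1) * p ^ (k + 1) *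
        qProdSub q p (m + 1 - (k + 1)) = qNum q (m + 1) * p * qBernoulliWeight q p m k := by
      rw [qBernoulliWeight, Nat.add_sub_add_right, qNum_mul_qBinom_succ_succ, pow_succ]
      ring
    rw [sum_range_succ', qNum_zero]
    simp only [absorb, ← mul_sum, sum_qBernoulliWeight]
    ring

/-- Mean of the q-Bernoulli distribution (2.17):
`∑_{κ=0}^n [κ] [n choose κ] p^κ (1 −· p)^{n-κ} = [n] p`. -/
theorem qBernoulli_mean {F : Type*} [Field F] (q p : F) (hq : q ≠ 1) (n : ℕ) :
    ∑ κ ∈ Finset.range (n + 1), qNum q κ * qBinom q n κ * p ^ κ * qProdSub q p (n - κ) =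
      qNum q n * p :=
  qBernoulli_mean_general q p n
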